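/- arXiv:1408.6716 — 2 statements merged into one kernel-verified Lean document; each statement's English description precedes it below -/
import Mathlib

section
/- The map γ : S² → C = {x²+y²+z²=0} ⊆ ℙ²(ℂ), sending ε to the class of ε' + i ε'' for a positively oriented orthonormal basis (ε, ε', ε''), is a bijection. -/
open Matrix

/-- `(ε, ε', ε'')` is a positively oriented orthonormal basis of `ℝ³`. -/
def PosOrthBasis (e e' e'' : Fin 3 → ℝ) : Prop :=
  e ⬝ᵥ e = 1 ∧ e' ⬝ᵥ e' = 1 ∧ e'' ⬝ᵥ e'' = 1 ∧
  e ⬝ᵥ e' = 0 ∧ e ⬝ᵥ e'' = 0 ∧ e' ⬝ᵥ e'' = 0 ∧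
  0 < (Matrix.of ![e, e', e'']).det

/-- The complex vector `ε' + i ε'' ∈ ℂ³`. -/
def cvec (e' e'' : Fin 3 → ℝ) : Fin 3 → ℂ :=
  fun i => (e' i : ℂ) + Complex.I * (e'' i : ℂ)

/-! Write `w = a + i b` with `a, b` real, so that `∑ wᵢ² = 0` says `|a| = |b|` and `a ⊥ b`.
A positively oriented orthonormal basis satisfies `ε = ε' × ε''`, and `ε' + i ε'' = c w` makes
`(ε', ε'')` the pair `(a, b)` rotated in its plane and scaled by `|c|`; hence
`ε = |c|² (a × b)` with `|c|² |a|² = 1`, i.e. `ε = (a × b) / |a|²`. Normalising `(a, b)`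
shows that this point is attained. -/

section CommRing

variable {R : Type*} [CommRing R]

/-- `(s • a - t • b, s • b + t • a)` are the real and imaginary parts of `(s + i t) (a + i b)`. -/
theorem cross_rotate (s t : R) (a b : Fin 3 → R) :
    (s • a - t • b) ⨯₃ (s • b + t • a) = (s ^ 2 + t ^ 2) • a ⨯₃ b := by
  simp only [map_add, map_sub, map_smul, LinearMap.sub_apply, LinearMap.smul_apply, cross_self,
    ← cross_anticomm a b]
  module

theorem dotProduct_self_rotate {ι : Type*} [Fintype ι] {a b : ι → R} (haa : a ⬝ᵥ a = b ⬝ᵥ b)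
    (hab : a ⬝ᵥ b = 0) (s t : R) :
    (s • a - t • b) ⬝ᵥ (s • a - t • b) = (s ^ 2 + t ^ 2) * a ⬝ᵥ a := by
  simp only [sub_dotProduct, dotProduct_sub, smul_dotProduct, dotProduct_smul, smul_eq_mul,
    ← haa, hab, dotProduct_comm b a]
  ring

end CommRing

theorem eq_cross_of_orthonormal {R : Type*} [CommRing R] [LinearOrder R] [IsStrictOrderedRing R]
    {e u v : Fin 3 → R} (he : e ⬝ᵥ e = 1) (hu : u ⬝ᵥ u = 1)
    (hv : v ⬝ᵥ v = 1) (huv : u ⬝ᵥ v = 0) (heu : e ⬝ᵥ u = 0) (hev : e ⬝ᵥ v = 0)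
    (hpos : 0 < e ⬝ᵥ u ⨯₃ v) : e = u ⨯₃ v := by
  set n := u ⨯₃ v
  have hn : n ⬝ᵥ n = 1 := by simp [n, cross_dot_cross, hu, hv, huv, dotProduct_comm v u]
  have hen : e ⨯₃ n = 0 := by simp [n, cross_cross_eq_smul_sub_smul', hev, dotProduct_comm u e, heu]
  have hen1 : e ⬝ᵥ n = 1 := by
    have h := cross_dot_cross e n e n
    rw [hen, zero_dotProduct, he, hn, dotProduct_comm n e] at h
    nlinarith
  rw [← sub_eq_zero, ← dotProduct_self_eq_zero]
  simp only [sub_dotProduct, dotProduct_sub, he, hn, hen1, dotProduct_comm n e]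
  norm_num

theorem PosOrthBasis.eq_cross {e u v : Fin 3 → ℝ} (h : PosOrthBasis e u v) : e = u ⨯₃ v := by
  obtain ⟨he, hu, hv, heu, hev, huv, hdet⟩ := h
  exact eq_cross_of_orthonormal he hu hv huv heu hev (by rwa [triple_product_eq_det])

theorem posOrthBasis_cross {u v : Fin 3 → ℝ} (hu : u ⬝ᵥ u = 1) (hv : v ⬝ᵥ v = 1)
    (huv : u ⬝ᵥ v = 0) : PosOrthBasis (u ⨯₃ v) u v := by
  have hn : u ⨯₃ v ⬝ᵥ u ⨯₃ v = 1 := by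
    simp [cross_dot_cross, hu, hv, huv, dotProduct_comm v u]
  refine ⟨hn, hu, hv, ?_, ?_, huv, ?_⟩
  · rw [dotProduct_comm]; exact dot_self_cross u v
  · rw [dotProduct_comm]; exact dot_cross_self u v
  · change 0 < Matrix.det ![_, _, _]
    rw [← triple_product_eq_det, hn]
    exact one_pos

theorem cvec_re_im (w : Fin 3 → ℂ) : cvec (fun i => (w i).re) (fun i => (w i).im) = w := by
  funext i
  simp [cvec, mul_comm Complex.I]

theorem cvec_inj {a b a' b' : Fin 3 → ℝ} : cvec a b = cvec a' b' ↔ a = a' ∧ b = b' := by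
  simp [cvec, funext_iff, Complex.ext_iff, forall_and]

theorem smul_cvec (c : ℂ) (a b : Fin 3 → ℝ) :
    c • cvec a b = cvec (c.re • a - c.im • b) (c.re • b + c.im • a) := by
  funext i
  apply Complex.ext <;> simp [cvec]

theorem sum_sq_cvec_eq_zero_iff {a b : Fin 3 → ℝ} :
    ∑ i, cvec a b i ^ 2 = 0 ↔ a ⬝ᵥ a = b ⬝ᵥ b ∧ a ⬝ᵥ b = 0 := by
  simp only [Complex.ext_iff, dotProduct, Fin.sum_univ_three, cvec]
  constructor <;> rintro ⟨h1, h2⟩ <;> constructor <;> simp [pow_two] at * <;> linarith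

theorem eq_of_posOrthBasis_of_cvec_eq_smul {a b ε ε' ε'' : Fin 3 → ℝ} {c : ℂ}
    (haa : a ⬝ᵥ a = b ⬝ᵥ b) (hab : a ⬝ᵥ b = 0) (h : PosOrthBasis ε ε' ε'')
    (hc : cvec ε' ε'' = c • cvec a b) : ε = (a ⬝ᵥ a)⁻¹ • a ⨯₃ b := by
  rw [smul_cvec, cvec_inj] at hc
  obtain ⟨rfl, rfl⟩ := hc
  have hnorm : (c.re ^ 2 + c.im ^ 2) * a ⬝ᵥ a = 1 :=
    (dotProduct_self_rotate haa hab c.re c.im).symm.trans h.2.1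
  rw [h.eq_cross, cross_rotate, eq_inv_of_mul_eq_one_left hnorm]

theorem exists_posOrthBasis_cvec_eq_smul {a b : Fin 3 → ℝ} (haa : a ⬝ᵥ a = b ⬝ᵥ b)
    (hab : a ⬝ᵥ b = 0) (ha : 0 < a ⬝ᵥ a) :
    ∃ ε' ε'', PosOrthBasis ((a ⬝ᵥ a)⁻¹ • a ⨯₃ b) ε' ε'' ∧
      ∃ c : ℂ, c ≠ 0 ∧ cvec ε' ε'' = c • cvec a b := by
  set r := √(a ⬝ᵥ a)
  have hr : r ≠ 0 := (Real.sqrt_pos.2 ha).ne'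
  have hr2 : r ^ 2 = a ⬝ᵥ a := Real.sq_sqrt ha.le
  have hunit : ∀ x : Fin 3 → ℝ, x ⬝ᵥ x = a ⬝ᵥ a → (r⁻¹ • x) ⬝ᵥ (r⁻¹ • x) = 1 := by
    intro x hx
    rw [smul_dotProduct, dotProduct_smul, smul_eq_mul, smul_eq_mul, hx, ← hr2]
    field_simp
  refine ⟨r⁻¹ • a, r⁻¹ • b, ?_, (r⁻¹ : ℝ), by simpa using hr, by simp [smul_cvec]⟩
  have hcross : (a ⬝ᵥ a)⁻¹ • a ⨯₃ b = (r⁻¹ • a) ⨯₃ (r⁻¹ • b) := by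
    simp [smul_smul, ← hr2, pow_two]
  rw [hcross]
  refine posOrthBasis_cross (hunit a rfl) (hunit b haa.symm) ?_
  simp [hab]

/-- `γ : S² → C = {x²+y²+z²=0} ⊆ ℙ²(ℂ)` is a bijection: every
point of the conic `C` (given by a nonzero vector `w` with `∑ wᵢ² = 0`) has
exactly one preimage `ε` on the unit sphere, i.e. exactly one unit vector `ε`
admitting a positively oriented orthonormal completion `(ε', ε'')` with
`ε' + i ε''` proportional to `w`. -/
theorem gamma_bijective
    (w : Fin 3 → ℂ) (hw : w ≠ 0) (hC : ∑ i : Fin 3, (w i) ^ 2 = 0) :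
    ∃! ε : Fin 3 → ℝ, ε ⬝ᵥ ε = 1 ∧
      ∃ ε' ε'' : Fin 3 → ℝ, PosOrthBasis ε ε' ε'' ∧
        ∃ c : ℂ, c ≠ 0 ∧ cvec ε' ε'' = c • w := by
  obtain ⟨a, b, rfl⟩ : ∃ a b, cvec a b = w := ⟨_, _, cvec_re_im w⟩
  obtain ⟨haa, hab⟩ := sum_sq_cvec_eq_zero_iff.1 hC
  have ha : 0 < a ⬝ᵥ a := by
    refine (dotProduct_self_star_nonneg a).lt_of_ne' fun h => hw ?_
    have hb : b = 0 := dotProduct_self_eq_zero.1 (haa ▸ h)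
    rw [dotProduct_self_eq_zero.1 h, hb]
    funext i
    simp [cvec]
  obtain ⟨ε', ε'', hbasis, hc⟩ := exists_posOrthBasis_cvec_eq_smul haa hab ha
  refine ⟨_, ⟨hbasis.1, ε', ε'', hbasis, hc⟩, ?_⟩
  rintro ε ⟨-, ε', ε'', hε, c, -, hc⟩
  exact eq_of_posOrthBasis_of_cvec_eq_smul haa hab hε hc
end

section
/- Let A₁,...,A₅ ∈ ℝ³ be coplanar points, say Aᵢ = (pᵢ, qᵢ, 0). For ε ∈ S² with γ(ε) = (x:y:z) ∈ C, the projections π_ε(Aᵢ) ∈ ℂ are given by pᵢx + qᵢy; consequently the Möbius equivalence class of (π_ε(A₁),...,π_ε(A₅)) depends only on the point (x:y) ∈ ℙ¹(ℂ), i.e., the photographic map factors through the 2:1 projection (x:y:z) ↦ (x:y) from C to ℙ¹(ℂ). -/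
open Matrix

theorem dotProduct_eq_of_apply_two_eq_zero {R : Type*} [CommSemiring R]
    (v w : Fin 3 → R) (hw : w 2 = 0) :
    v ⬝ᵥ w = w 0 * v 0 + w 1 * v 1 := by
  simp [dotProduct, Fin.sum_univ_three, hw, mul_comm]

/-- The Möbius transformation `z ↦ c z`. -/
noncomputable def scalingGL {K : Type*} [Field K] (c : K) (hc : c ≠ 0) : GL (Fin 2) K :=
  GeneralLinearGroup.mkOfDetNeZero (diagonal ![c, 1]) (by simp [hc])

theorem scalingGL_mulVec {K : Type*} [Field K] (c : K) (hc : c ≠ 0) (z : K) :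
    (scalingGL c hc : Matrix (Fin 2) (Fin 2) K) *ᵥ ![z, 1] = ![c * z, 1] := by
  ext j
  fin_cases j <;> simp [scalingGL, GeneralLinearGroup.mkOfDetNeZero]

theorem planar_photographic_map_factors_general
    (A : Fin 5 → Fin 3 → ℝ) (hplanar : ∀ i, A i 2 = 0)
    (ε' ε'' δ' δ'' : Fin 3 → ℝ)
    (hxy : ∃ c : ℂ, c ≠ 0 ∧
      cvec δ' δ'' 0 = c * cvec ε' ε'' 0 ∧ cvec δ' δ'' 1 = c * cvec ε' ε'' 1) :
    (∀ i, (cvec ε' ε'' ⬝ᵥ fun j => ((A i j : ℂ)))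
        = (A i 0 : ℂ) * cvec ε' ε'' 0 + (A i 1 : ℂ) * cvec ε' ε'' 1) ∧
    ∃ g : GL (Fin 2) ℂ, ∀ i, ∃ d : ℂ, d ≠ 0 ∧
      (g : Matrix (Fin 2) (Fin 2) ℂ).mulVec
          ![(A i 0 : ℂ) * cvec ε' ε'' 0 + (A i 1 : ℂ) * cvec ε' ε'' 1, 1]
        = d • ![(A i 0 : ℂ) * cvec δ' δ'' 0 + (A i 1 : ℂ) * cvec δ' δ'' 1, 1] := by
  obtain ⟨c, hc, h0, h1⟩ := hxy
  refine ⟨fun i => dotProduct_eq_of_apply_two_eq_zero _ _ (by simp [hplanar i]),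
    scalingGL c hc, fun i => ⟨1, one_ne_zero, ?_⟩⟩
  rw [scalingGL_mulVec, one_smul, h0, h1]
  congr 2
  ring

/-- let `A₁, …, A₅` be coplanar points `Aᵢ = (pᵢ, qᵢ, 0)` of
`ℝ³`. For a direction `ε ∈ S²` with `γ(ε) = (x:y:z)`, the projection
`π_ε(Aᵢ) ∈ ℂ` equals `pᵢ x + qᵢ y`; consequently, if two directions `ε, δ`
have `γ`-images with the same `(x:y) ∈ ℙ¹(ℂ)`, the two projected 5-tuples are
Möbius equivalent, i.e. the photographic map factors through the 2:1 map
`(x:y:z) ↦ (x:y)`. -/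
theorem planar_photographic_map_factors
    (A : Fin 5 → Fin 3 → ℝ) (hplanar : ∀ i, A i 2 = 0)
    (ε ε' ε'' δ δ' δ'' : Fin 3 → ℝ)
    (hε : PosOrthBasis ε ε' ε'') (hδ : PosOrthBasis δ δ' δ'')
    (hxy : ∃ c : ℂ, c ≠ 0 ∧
      cvec δ' δ'' 0 = c * cvec ε' ε'' 0 ∧ cvec δ' δ'' 1 = c * cvec ε' ε'' 1) :
    (∀ i, (cvec ε' ε'' ⬝ᵥ fun j => ((A i j : ℂ)))
        = (A i 0 : ℂ) * cvec ε' ε'' 0 + (A i 1 : ℂ) * cvec ε' ε'' 1) ∧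
    ∃ g : GL (Fin 2) ℂ, ∀ i, ∃ d : ℂ, d ≠ 0 ∧
      (g : Matrix (Fin 2) (Fin 2) ℂ).mulVec
          ![(A i 0 : ℂ) * cvec ε' ε'' 0 + (A i 1 : ℂ) * cvec ε' ε'' 1, 1]
        = d • ![(A i 0 : ℂ) * cvec δ' δ'' 0 + (A i 1 : ℂ) * cvec δ' δ'' 1, 1] :=
  planar_photographic_map_factors_general A hplanar ε' ε'' δ' δ'' hxy
end
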